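/- Let C be a self-dual Z/2kZ-code of length n with minimum Euclidean weight d_E(C) (the least Euclidean weight of a nonzero codeword). Then the minimum norm of the Construction A lattice A_{2k}(C), i.e., the least value of <x,x> over nonzero x in A_{2k}(C), equals min(2k, d_E(C)/(2k)). -/

import Mathlib

/-- The signed representative map `ρ : ℤ/2kℤ → ℤ`. -/
def signedRep (k : ℕ) (a : ZMod (2 * k)) : ℤ :=
  if a.val ≤ k then (a.val : ℤ) else (a.val : ℤ) - 2 * k

/-- The Euclidean weight of a codeword over `ℤ/2kℤ`. -/
def euclWt (k n : ℕ) (c : Fin n → ZMod (2 * k)) : ℤ :=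
  ∑ i, min (((c i).val : ℤ) ^ 2) ((2 * (k : ℤ) - (c i).val) ^ 2)

/-- The Construction A lattice `A_{2k}(C) = (1/√(2k))(ρ(C) + 2kℤⁿ)`. -/
def constructionA (k n : ℕ) (C : Submodule (ZMod (2 * k)) (Fin n → ZMod (2 * k))) :
    Set (Fin n → ℝ) :=
  {v | ∃ c ∈ C, ∃ z : Fin n → ℤ,
    v = fun i => ((signedRep k (c i) : ℝ) + 2 * k * z i) / Real.sqrt (2 * k)}

/-!
Every vector of `A_{2k}(C)` is `(ρ(c) + 2kz)/√(2k)`, so its norm is `∑ (ρ(cᵢ) + 2kzᵢ)² / 2k`.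
Since `|ρ(a)| ≤ k`, the representative `ρ(a)` minimises `m²` over `m ≡ a (mod 2k)`, and
`ρ(a)² = min(a², (2k - a)²)` is the Euclidean weight of `a`. Hence a vector with `c ≠ 0` has norm
at least `d_E(C)/2k`, with equality at `z = 0` for a codeword of minimal weight, while a nonzero
vector with `c = 0` lies in `√(2k) ℤⁿ` and has norm at least `2k`, with equality at `z = eᵢ`.
-/

@[simp]
theorem signedRep_zero (k : ℕ) : signedRep k 0 = 0 := by
  simp [signedRep]

theorem signedRep_sq (k : ℕ) (a : ZMod (2 * k)) :
    signedRep k a ^ 2 = min ((a.val : ℤ) ^ 2) ((2 * (k : ℤ) - a.val) ^ 2) := by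
  unfold signedRep
  split_ifs with h
  · rw [min_eq_left]
    have : (a.val : ℤ) ≤ k := by exact_mod_cast h
    nlinarith
  · have : (k : ℤ) < a.val := by exact_mod_cast not_le.mp h
    rw [min_eq_right (by nlinarith)]
    ring

theorem euclWt_eq_sum_sq_signedRep (k n : ℕ) (c : Fin n → ZMod (2 * k)) :
    euclWt k n c = ∑ i, signedRep k (c i) ^ 2 := by
  simp only [euclWt, signedRep_sq]

theorem abs_signedRep_le {k : ℕ} (hk : 0 < k) (a : ZMod (2 * k)) : |signedRep k a| ≤ k := by
  have : NeZero (2 * k) := ⟨by omega⟩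
  have : (a.val : ℤ) < 2 * k := by exact_mod_cast a.val_lt
  unfold signedRep
  split_ifs with h
  · rw [abs_of_nonneg (by positivity)]
    exact_mod_cast h
  · have : (k : ℤ) < a.val := by exact_mod_cast not_le.mp h
    rw [abs_le]
    constructor <;> linarith

theorem intCast_signedRep {k : ℕ} (hk : 0 < k) (a : ZMod (2 * k)) :
    ((signedRep k a : ℤ) : ZMod (2 * k)) = a := by
  have : NeZero (2 * k) := ⟨by omega⟩
  unfold signedRep
  split_ifs
  · simp
  · have h2k : ((2 * k : ℤ) : ZMod (2 * k)) = 0 := by exact_mod_cast ZMod.natCast_self (2 * k)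
    rw [Int.cast_sub, h2k, sub_zero]
    simp

theorem signedRep_add_two_mul_mul_eq_zero_iff {k : ℕ} (hk : 0 < k) (a : ZMod (2 * k)) (z : ℤ) :
    signedRep k a + 2 * k * z = 0 ↔ a = 0 ∧ z = 0 := by
  refine ⟨fun h => ?_, fun ⟨ha, hz⟩ => by simp [ha, hz]⟩
  have ha : a = 0 := by
    have h2k : (2 * k : ZMod (2 * k)) = 0 := by exact_mod_cast ZMod.natCast_self (2 * k)
    simpa [intCast_signedRep hk, h2k] using congrArg (Int.cast : ℤ → ZMod (2 * k)) h
  subst ha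
  simp only [signedRep_zero, zero_add, mul_eq_zero] at h
  exact ⟨rfl, by omega⟩

theorem sq_le_sq_add_mul_of_abs_le {a k : ℤ} (h : |a| ≤ k) (z : ℤ) :
    a ^ 2 ≤ (a + 2 * k * z) ^ 2 := by
  have hz : |z| ≤ z ^ 2 := by simpa using Int.natAbs_le_self_sq z
  have hk : 0 ≤ k := (abs_nonneg a).trans h
  have : -(a * z) ≤ k * z ^ 2 := by
    calc -(a * z) ≤ |a| * |z| := by rw [← abs_mul]; exact neg_le_abs _
      _ ≤ k * z ^ 2 := mul_le_mul h hz (abs_nonneg z) hk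
  nlinarith

theorem one_le_sum_sq_of_ne_zero {ι : Type*} [Fintype ι] {z : ι → ℤ} (hz : z ≠ 0) :
    1 ≤ ∑ i, z i ^ 2 := by
  obtain ⟨i, hi⟩ := Function.ne_iff.mp hz
  calc 1 ≤ z i ^ 2 := (one_le_sq_iff_one_le_abs _).mpr (Int.one_le_abs hi)
    _ ≤ ∑ j, z j ^ 2 := Finset.single_le_sum (fun j _ => sq_nonneg (z j)) (Finset.mem_univ i)

theorem sq_le_sum_sq_mul_of_ne_zero {ι : Type*} [Fintype ι] (m : ℤ) {z : ι → ℤ} (hz : z ≠ 0) :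
    m ^ 2 ≤ ∑ i, (m * z i) ^ 2 := by
  simp only [mul_pow, ← Finset.mul_sum]
  exact le_mul_of_one_le_right (sq_nonneg m) (one_le_sum_sq_of_ne_zero hz)

theorem euclWt_le_sum_sq_signedRep_add {k n : ℕ} (hk : 0 < k) (c : Fin n → ZMod (2 * k))
    (z : Fin n → ℤ) : euclWt k n c ≤ ∑ i, (signedRep k (c i) + 2 * k * z i) ^ 2 := by
  rw [euclWt_eq_sum_sq_signedRep]
  exact Finset.sum_le_sum fun i _ => sq_le_sq_add_mul_of_abs_le (abs_signedRep_le hk (c i)) (z i)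

noncomputable def constructionAVec (k n : ℕ) (c : Fin n → ZMod (2 * k)) (z : Fin n → ℤ) :
    Fin n → ℝ :=
  fun i => ((signedRep k (c i) : ℝ) + 2 * k * z i) / Real.sqrt (2 * k)

theorem sum_mul_self_constructionAVec (k n : ℕ) (c : Fin n → ZMod (2 * k)) (z : Fin n → ℤ) :
    ∑ i, constructionAVec k n c z i * constructionAVec k n c z i =
      ((∑ i, (signedRep k (c i) + 2 * k * z i) ^ 2 : ℤ) : ℝ) / (2 * k) := by
  have hsqrt : Real.sqrt (2 * k) * Real.sqrt (2 * k) = 2 * k := Real.mul_self_sqrt (by positivity)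
  push_cast
  rw [Finset.sum_div]
  refine Finset.sum_congr rfl fun i _ => ?_
  rw [constructionAVec, div_mul_div_comm, hsqrt, sq]

theorem constructionAVec_eq_zero_iff {k n : ℕ} (hk : 0 < k) (c : Fin n → ZMod (2 * k))
    (z : Fin n → ℤ) : constructionAVec k n c z = 0 ↔ c = 0 ∧ z = 0 := by
  have hsqrt : Real.sqrt (2 * k) ≠ 0 := by positivity
  simp only [funext_iff, Pi.zero_apply, constructionAVec, div_eq_zero_iff, hsqrt, or_false]
  exact_mod_cast
    (forall_congr' fun i => signedRep_add_two_mul_mul_eq_zero_iff hk (c i) (z i)).trans forall_and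

theorem sum_mul_self_constructionAVec_zero_right (k n : ℕ) (c : Fin n → ZMod (2 * k)) :
    ∑ i, constructionAVec k n c 0 i * constructionAVec k n c 0 i =
      (euclWt k n c : ℝ) / (2 * k) := by
  simp [sum_mul_self_constructionAVec, euclWt_eq_sum_sq_signedRep]

theorem sum_mul_self_constructionAVec_single {k n : ℕ} (hk : 0 < k) (i : Fin n) :
    ∑ j, constructionAVec k n 0 (Pi.single i 1) j * constructionAVec k n 0 (Pi.single i 1) j =
      2 * k := by
  have hk2 : (2 * k : ℝ) ≠ 0 := by positivity
  rw [sum_mul_self_constructionAVec, div_eq_iff hk2]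
  simp [Pi.single_apply, sq]

theorem euclWt_div_le_sum_mul_self_constructionAVec {k n : ℕ} (hk : 0 < k)
    (c : Fin n → ZMod (2 * k)) (z : Fin n → ℤ) :
    (euclWt k n c : ℝ) / (2 * k) ≤
      ∑ i, constructionAVec k n c z i * constructionAVec k n c z i := by
  rw [sum_mul_self_constructionAVec]
  gcongr
  exact_mod_cast euclWt_le_sum_sq_signedRep_add hk c z

theorem two_mul_le_sum_mul_self_constructionAVec_zero {k n : ℕ} (hk : 0 < k) {z : Fin n → ℤ}
    (hz : z ≠ 0) :
    2 * (k : ℝ) ≤ ∑ i, constructionAVec k n 0 z i * constructionAVec k n 0 z i := by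
  rw [sum_mul_self_constructionAVec, le_div_iff₀ (by positivity)]
  simpa [sq] using (Int.cast_le (R := ℝ)).2 (sq_le_sum_sq_mul_of_ne_zero (2 * k) hz)

theorem constructionA_min_norm_general
    (k n : ℕ) (hk : 0 < k) (hn : 0 < n)
    (C : Submodule (ZMod (2 * k)) (Fin n → ZMod (2 * k)))
    (dE : ℤ)
    (hdE : IsLeast {w : ℤ | ∃ c ∈ C, c ≠ 0 ∧ w = euclWt k n c} dE) :
    IsLeast {r : ℝ | ∃ v ∈ constructionA k n C, v ≠ 0 ∧ r = ∑ i, v i * v i}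
      (min (2 * (k : ℝ)) ((dE : ℝ) / (2 * k))) := by
  constructor
  · rcases min_choice (2 * (k : ℝ)) ((dE : ℝ) / (2 * k)) with h | h <;> rw [h]
    · refine ⟨constructionAVec k n 0 (Pi.single ⟨0, hn⟩ 1), ⟨0, C.zero_mem, _, rfl⟩, ?_,
        (sum_mul_self_constructionAVec_single hk _).symm⟩
      rw [Ne, constructionAVec_eq_zero_iff hk]
      simp
    · obtain ⟨c, hcC, hc0, rfl⟩ := hdE.1
      refine ⟨constructionAVec k n c 0, ⟨c, hcC, 0, rfl⟩, ?_,
        (sum_mul_self_constructionAVec_zero_right k n c).symm⟩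
      rw [Ne, constructionAVec_eq_zero_iff hk]
      exact fun h => hc0 h.1
  · rintro r ⟨v, hv, hv0, rfl⟩
    obtain ⟨c, hcC, z, rfl⟩ : ∃ c ∈ C, ∃ z, v = constructionAVec k n c z := hv
    by_cases hc : c = 0
    · subst hc
      have hz : z ≠ 0 := fun hz => hv0 ((constructionAVec_eq_zero_iff hk 0 z).2 ⟨rfl, hz⟩)
      exact (min_le_left _ _).trans (two_mul_le_sum_mul_self_constructionAVec_zero hk hz)
    · have hdc : (dE : ℝ) ≤ euclWt k n c := mod_cast hdE.2 ⟨c, hcC, hc, rfl⟩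
      exact (min_le_right _ _).trans ((div_le_div_of_nonneg_right hdc (by positivity)).trans
        (euclWt_div_le_sum_mul_self_constructionAVec hk c z))

theorem constructionA_min_norm
    (k n : ℕ) (hk : 0 < k) (hn : 0 < n)
    (C : Submodule (ZMod (2 * k)) (Fin n → ZMod (2 * k)))
    (hself : ∀ x : Fin n → ZMod (2 * k),
      x ∈ C ↔ ∀ y ∈ C, ∑ i, x i * y i = 0)
    (hC : C ≠ ⊥)
    (dE : ℤ)
    (hdE : IsLeast {w : ℤ | ∃ c ∈ C, c ≠ 0 ∧ w = euclWt k n c} dE) :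
    IsLeast {r : ℝ | ∃ v ∈ constructionA k n C, v ≠ 0 ∧ r = ∑ i, v i * v i}
      (min (2 * (k : ℝ)) ((dE : ℝ) / (2 * k))) :=
  constructionA_min_norm_general k n hk hn C dE hdE
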